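/- For 0 < i < n and any τ ∈ S_n, the i-th face φ(τ)∘∂_i : [n−1] → {0,1}^n has, in each coordinate m, neither constant value 0 nor constant value 1; equivalently, the inner faces of a nondegenerate n-simplex of the n-cube are not contained in any coordinate face Δ^1×⋯×{ε}×⋯×Δ^1 of the boundary of the cube. -/

import Mathlib

/-- The n-simplex phi(tau) of the n-cube associated with a permutation tau of
{1, ..., n} (encoded 0-based as `Equiv.Perm (Fin n)`): its i-th coordinate is the
monotone map `a^{tau(i)} : [n] -> {0,1}`, sending k to 0 iff k < tau(i) (1-based),
i.e. iff k <= tau(i) (0-based). -/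
def phi (n : ℕ) (τ : Equiv.Perm (Fin n)) : Fin (n + 1) → Fin n → Fin 2 :=
  fun k i => if (k : ℕ) ≤ (τ i : ℕ) then 0 else 1

theorem phi_zero {n : ℕ} (τ : Equiv.Perm (Fin n)) (m : Fin n) : phi n τ 0 m = 0 := by
  simp [phi]

theorem phi_last {n : ℕ} (τ : Equiv.Perm (Fin n)) (m : Fin n) : phi n τ (Fin.last n) m = 1 := by
  simp [phi, (τ m).isLt]

/-- An inner face of `phi n τ` still contains the vertices `0` and `Fin.last n`, on which every
coordinate takes the values `0` and `1` respectively. -/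
theorem phi_comp_succAbove_surjective {n : ℕ} (τ : Equiv.Perm (Fin n)) {p : Fin (n + 1)}
    (hp₀ : p ≠ 0) (hp : p ≠ Fin.last n) (m : Fin n) :
    Function.Surjective fun k => phi n τ (p.succAbove k) m := by
  obtain ⟨k₀, hk₀⟩ := Fin.exists_succAbove_eq hp₀.symm
  obtain ⟨k₁, hk₁⟩ := Fin.exists_succAbove_eq hp.symm
  intro ε
  fin_cases ε
  · exact ⟨k₀, by simp [hk₀, phi_zero]⟩
  · exact ⟨k₁, by simp [hk₁, phi_last]⟩

/-- for 0 < i < n and any permutation tau, the i-th face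
phi(tau) . d_i : [n-1] -> {0,1}^n has, in each coordinate m, neither constant value 0
nor constant value 1; i.e. the inner faces of a nondegenerate n-simplex of the n-cube
are not contained in any coordinate face of the boundary of the cube. -/
theorem stmt_10 (n i : ℕ) (h0 : 0 < i) (hn : i < n) (τ : Equiv.Perm (Fin n))
    (m : Fin n) :
    (∃ k : Fin n, phi n τ ((⟨i, by omega⟩ : Fin (n + 1)).succAbove k) m ≠ 0) ∧
    (∃ k : Fin n, phi n τ ((⟨i, by omega⟩ : Fin (n + 1)).succAbove k) m ≠ 1) := by
  have hsurj := phi_comp_succAbove_surjective τ (p := ⟨i, by omega⟩)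
    (Fin.ne_of_val_ne h0.ne') (Fin.ne_of_val_ne hn.ne) m
  obtain ⟨k₁, hk₁⟩ := hsurj 1
  obtain ⟨k₀, hk₀⟩ := hsurj 0
  exact ⟨⟨k₁, by simp [hk₁]⟩, ⟨k₀, by simp [hk₀]⟩⟩
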